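/- arXiv:1802.07153 — 2 statements merged into one kernel-verified Lean document; each statement's English description precedes it below -/
import Mathlib

section
/- Let k ≥ 1 and n ≥ 1 be integers, and let A_1, …, A_n be linear subspaces of ℂ^k satisfying: for every nonempty subset I ⊆ {1, …, n} and every choice of vectors a^{(i)} ∈ A_i for each i ∈ I, one has ∑_{j=1}^{k} ∏_{i ∈ I} a^{(i)}_j = 0, where a^{(i)}_j denotes the j-th coordinate of a^{(i)}. Then ∑_{i=1}^{n} dim A_i ≤ k − 1. -/
/-!
For `aᵢ ∈ Aᵢ`, expanding `∏ᵢ (1 + aᵢ)` and applying the hypothesis to every nonempty `I` gives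
`∑ⱼ ∏ᵢ (1 + aᵢ j) = k`, so the `aᵢ` can never be chosen to make every coordinate of
`∏ᵢ (1 + aᵢ)` vanish.

We prove the stronger bound `∑ᵢ dim (Aᵢ ∩ ℂ^s) < |s|` for every nonempty set `s` of coordinates
(`ℂ^s` meaning the vectors supported in `s`), by strong induction on `s`. Suppose it fails for `s`,
and let `rᵢ(t)` be the rank of the projection of `Aᵢ ∩ ℂ^s` onto the coordinates `t`. Then the
bound for `s \ t` gives `|t| ≤ ∑ᵢ rᵢ(t)` for all `t ⊆ s`. The `rᵢ` are submodular, so by Rado's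
theorem `s` is covered by sets `Pᵢ` onto which `Aᵢ ∩ ℂ^s` projects surjectively. Taking
`aᵢ ∈ Aᵢ ∩ ℂ^s` equal to `-1` on `Pᵢ` kills every coordinate in `s`, and outside `s` every
product is `1`. The sum is then `k - |s| ≠ k`, a contradiction.
-/

open Finset Module

theorem Submodule.finrank_map_add_finrank_inf_ker {K V W : Type*} [DivisionRing K]
    [AddCommGroup V] [Module K V] [AddCommGroup W] [Module K W] [FiniteDimensional K V]
    (B : Submodule K V) (f : V →ₗ[K] W) :
    finrank K (B.map f) + finrank K (B ⊓ LinearMap.ker f : Submodule K V) = finrank K B := by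
  rw [← (f.domRestrict B).finrank_range_add_finrank_ker, LinearMap.range_domRestrict,
    LinearMap.ker_domRestrict, ← (Submodule.comapSubtypeEquivOfLe inf_le_left).finrank_eq,
    Submodule.comap_inf, Submodule.comap_subtype_self, top_inf_eq]

namespace Finset

variable (K : Type*) {σ : Type*} [DivisionRing K]

def restrictₗ (t : Finset σ) : (σ → K) →ₗ[K] (t → K) := LinearMap.funLeft K K (↑)

variable {K}

lemma mem_ker_restrictₗ {t : Finset σ} {a : σ → K} :
    a ∈ LinearMap.ker (t.restrictₗ K) ↔ ∀ j ∈ t, a j = 0 := by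
  simp [restrictₗ, funext_iff, LinearMap.funLeft_apply]

lemma ker_restrictₗ_le_of_subset {t t' : Finset σ} (h : t ⊆ t') :
    LinearMap.ker (t'.restrictₗ K) ≤ LinearMap.ker (t.restrictₗ K) :=
  fun _ ha ↦ mem_ker_restrictₗ.2 fun j hj ↦ mem_ker_restrictₗ.1 ha j (h hj)

lemma ker_restrictₗ_union [DecidableEq σ] (t t' : Finset σ) :
    LinearMap.ker ((t ∪ t').restrictₗ K) =
      LinearMap.ker (t.restrictₗ K) ⊓ LinearMap.ker (t'.restrictₗ K) := by
  ext a
  simp only [Submodule.mem_inf, mem_ker_restrictₗ, mem_union]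
  grind

lemma ker_restrictₗ_empty : LinearMap.ker ((∅ : Finset σ).restrictₗ K) = ⊤ :=
  eq_top_iff.2 fun _ _ ↦ mem_ker_restrictₗ.2 fun _ h ↦ absurd h (notMem_empty _)

lemma ker_restrictₗ_univ [Fintype σ] : LinearMap.ker ((univ : Finset σ).restrictₗ K) = ⊥ :=
  (Submodule.eq_bot_iff _).2 fun _ ha ↦ funext fun j ↦ mem_ker_restrictₗ.1 ha j (mem_univ j)

end Finset

namespace Submodule

variable {K σ : Type*} [DivisionRing K]

noncomputable def rankOn (B : Submodule K (σ → K)) (t : Finset σ) : ℕ :=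
  finrank K (B.map (t.restrictₗ K))

variable [Fintype σ] (B : Submodule K (σ → K))

lemma rankOn_add_finrank_inf_ker (t : Finset σ) :
    B.rankOn t + finrank K (B ⊓ LinearMap.ker (t.restrictₗ K) : Submodule K (σ → K)) =
      finrank K B :=
  B.finrank_map_add_finrank_inf_ker _

lemma rankOn_empty : B.rankOn ∅ = 0 :=
  Nat.le_zero.1 <| (finrank_le _).trans_eq (by simp)

lemma rankOn_mono : Monotone B.rankOn := by
  intro t t' h
  have ht := B.rankOn_add_finrank_inf_ker t
  have ht' := B.rankOn_add_finrank_inf_ker t'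
  have hle := finrank_mono (inf_le_inf_left B (ker_restrictₗ_le_of_subset (K := K) h))
  omega

lemma rankOn_union_add_rankOn_inter_le [DecidableEq σ] (t t' : Finset σ) :
    B.rankOn (t ∪ t') + B.rankOn (t ∩ t') ≤ B.rankOn t + B.rankOn t' := by
  have hunion : B ⊓ LinearMap.ker ((t ∪ t').restrictₗ K) =
      (B ⊓ LinearMap.ker (t.restrictₗ K)) ⊓ (B ⊓ LinearMap.ker (t'.restrictₗ K)) := by
    rw [ker_restrictₗ_union, inf_inf_distrib_left]
  have hinter : (B ⊓ LinearMap.ker (t.restrictₗ K)) ⊔ (B ⊓ LinearMap.ker (t'.restrictₗ K)) ≤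
      B ⊓ LinearMap.ker ((t ∩ t').restrictₗ K) :=
    sup_le (inf_le_inf_left B (ker_restrictₗ_le_of_subset inter_subset_left))
      (inf_le_inf_left B (ker_restrictₗ_le_of_subset inter_subset_right))
  have hmodular := finrank_sup_add_finrank_inf_eq (B ⊓ LinearMap.ker (t.restrictₗ K))
    (B ⊓ LinearMap.ker (t'.restrictₗ K))
  have hle := finrank_mono hinter
  have ht := B.rankOn_add_finrank_inf_ker t
  have ht' := B.rankOn_add_finrank_inf_ker t'
  have hcap := B.rankOn_add_finrank_inf_ker (t ∩ t')
  have hcup := B.rankOn_add_finrank_inf_ker (t ∪ t')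
  rw [hunion] at hcup
  omega

lemma exists_mem_restrictₗ_eq {t : Finset σ} (h : #t ≤ B.rankOn t) (v : t → K) :
    ∃ b ∈ B, t.restrictₗ K b = v := by
  have htop : B.map (t.restrictₗ K) = ⊤ := by
    apply eq_top_of_finrank_eq
    have := finrank_le (B.map (t.restrictₗ K))
    simp only [rankOn, finrank_fintype_fun_eq_card, Fintype.card_coe] at h this ⊢
    omega
  rw [← mem_map, htop]
  exact mem_top

end Submodule

section Rado

variable {α ι : Type*} [DecidableEq ι]

lemma sum_card_update_erase_lt [DecidableEq α] {L : α → Finset ι} {X : Finset α} {x₀ : α}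
    (hx₀ : x₀ ∈ X) {i : ι} (hi : i ∈ L x₀) :
    ∑ x ∈ X, #(Function.update L x₀ ((L x₀).erase i) x) < ∑ x ∈ X, #(L x) := by
  refine sum_lt_sum (fun x _ ↦ ?_) ⟨x₀, hx₀, ?_⟩
  · rcases eq_or_ne x x₀ with rfl | hx
    · simpa using card_erase_le
    · simp [hx]
  · simpa using card_erase_lt_of_mem hi

variable [Fintype ι]

def RadoCondition (r : ι → Finset α → ℕ) (L : α → Finset ι) (X : Finset α) : Prop :=
  ∀ t ⊆ X, #t ≤ ∑ i, r i {x ∈ t | i ∈ L x}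

variable {r : ι → Finset α → ℕ} {L : α → Finset ι} {X : Finset α}

lemma exists_cover_of_card_le_one (hr : ∀ i, r i ∅ = 0) (hL : ∀ x ∈ X, #(L x) ≤ 1)
    (h : RadoCondition r L X) :
    ∃ P : ι → Finset α, (∀ x ∈ X, ∃ i ∈ L x, x ∈ P i) ∧ ∀ i, #(P i) ≤ r i (P i) := by
  refine ⟨fun i ↦ {x ∈ X | i ∈ L x}, fun x hx ↦ ?_, fun i ↦ ?_⟩
  · obtain ⟨i, hi⟩ : (L x).Nonempty := by
      by_contra hempty
      have := h {x} (singleton_subset_iff.2 hx)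
      simp [filter_singleton, not_nonempty_iff_eq_empty.1 hempty, hr] at this
    exact ⟨i, hi, mem_filter.2 ⟨hx, hi⟩⟩
  · calc #{x ∈ X | i ∈ L x}
        ≤ ∑ j, r j {x ∈ {x ∈ X | i ∈ L x} | j ∈ L x} := h _ (filter_subset _ _)
      _ = r i {x ∈ {x ∈ X | i ∈ L x} | i ∈ L x} := Fintype.sum_eq_single i fun j hji ↦ by
        convert hr j
        refine filter_false_of_mem fun x hx hj ↦ hji ?_
        rw [mem_filter] at hx
        exact card_le_one.1 (hL x hx.1) j hj i hx.2
      _ = r i {x ∈ X | i ∈ L x} := by simp only [filter_filter, and_self]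

variable [DecidableEq α]

lemma mem_of_not_radoCondition_update {x₀ : α} {l : Finset ι} (h : RadoCondition r L X)
    {t : Finset α} (htX : t ⊆ X)
    (ht : ∑ i, r i {x ∈ t | i ∈ Function.update L x₀ l x} < #t) : x₀ ∈ t := by
  by_contra hx₀
  refine (h t htX).not_gt (ht.trans_eq' (sum_congr rfl fun i _ ↦ congrArg (r i) ?_))
  exact filter_congr fun x hx ↦ by rw [Function.update_of_ne (ne_of_mem_of_not_mem hx hx₀)]

lemma exists_radoCondition_update_erase (hmono : ∀ i, Monotone (r i))
    (hsub : ∀ i t t', r i (t ∪ t') + r i (t ∩ t') ≤ r i t + r i t')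
    (h : RadoCondition r L X) {x₀ : α} {i₁ i₂ : ι} (h₁ : i₁ ∈ L x₀) (h₂ : i₂ ∈ L x₀)
    (hne : i₁ ≠ i₂) :
    ∃ i ∈ L x₀, RadoCondition r (Function.update L x₀ ((L x₀).erase i)) X := by
  by_contra! hfail
  set L₁ := Function.update L x₀ ((L x₀).erase i₁)
  set L₂ := Function.update L x₀ ((L x₀).erase i₂)
  obtain ⟨t₁, ht₁X, ht₁⟩ : ∃ t₁ ⊆ X, ∑ i, r i {x ∈ t₁ | i ∈ L₁ x} < #t₁ := by
    simpa [RadoCondition] using hfail i₁ h₁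
  obtain ⟨t₂, ht₂X, ht₂⟩ : ∃ t₂ ⊆ X, ∑ i, r i {x ∈ t₂ | i ∈ L₂ x} < #t₂ := by
    simpa [RadoCondition] using hfail i₂ h₂
  have hx₀t₁ := mem_of_not_radoCondition_update h ht₁X ht₁
  have hx₀t₂ := mem_of_not_radoCondition_update h ht₂X ht₂
  -- Submodularity on the two violating sets contradicts the condition for `L` on
  -- `t₁ ∪ t₂` and `(t₁ ∩ t₂) \ {x₀}`.
  have hunion : ∀ i, {x ∈ t₁ ∪ t₂ | i ∈ L x} ⊆ {x ∈ t₁ | i ∈ L₁ x} ∪ {x ∈ t₂ | i ∈ L₂ x} := by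
    intro i x
    simp only [L₁, L₂, mem_filter, mem_union, Function.update_apply]
    grind
  have hinter : ∀ i, {x ∈ (t₁ ∩ t₂).erase x₀ | i ∈ L x} ⊆
      {x ∈ t₁ | i ∈ L₁ x} ∩ {x ∈ t₂ | i ∈ L₂ x} := by
    intro i x
    simp only [L₁, L₂, mem_filter, mem_inter, Function.update_apply, mem_erase]
    grind
  have hstep : ∀ i, r i {x ∈ t₁ ∪ t₂ | i ∈ L x} + r i {x ∈ (t₁ ∩ t₂).erase x₀ | i ∈ L x} ≤
      r i {x ∈ t₁ | i ∈ L₁ x} + r i {x ∈ t₂ | i ∈ L₂ x} := fun i ↦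
    (add_le_add (hmono i (hunion i)) (hmono i (hinter i))).trans (hsub i _ _)
  have hcard : #(t₁ ∪ t₂) + (#((t₁ ∩ t₂).erase x₀) + 1) = #t₁ + #t₂ := by
    rw [card_erase_add_one (mem_inter.2 ⟨hx₀t₁, hx₀t₂⟩), card_union_add_card_inter]
  have hU := h (t₁ ∪ t₂) (union_subset ht₁X ht₂X)
  have hI := h ((t₁ ∩ t₂).erase x₀) ((erase_subset _ _).trans (inter_subset_left.trans ht₁X))
  have hsum := sum_le_sum fun i (_ : i ∈ univ) ↦ hstep i
  rw [sum_add_distrib, sum_add_distrib] at hsum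
  omega

/-- Rado's theorem for submodular rank functions, with covers in place of partitions. -/
theorem exists_cover_of_radoCondition (hr : ∀ i, r i ∅ = 0) (hmono : ∀ i, Monotone (r i))
    (hsub : ∀ i t t', r i (t ∪ t') + r i (t ∩ t') ≤ r i t + r i t')
    (L : α → Finset ι) (h : RadoCondition r L X) :
    ∃ P : ι → Finset α, (∀ x ∈ X, ∃ i ∈ L x, x ∈ P i) ∧ ∀ i, #(P i) ≤ r i (P i) := by
  by_cases hL : ∀ x ∈ X, #(L x) ≤ 1
  · exact exists_cover_of_card_le_one hr hL h
  push Not at hL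
  obtain ⟨x₀, hx₀, hcard⟩ := hL
  obtain ⟨i₁, h₁, i₂, h₂, hne⟩ := one_lt_card.1 hcard
  obtain ⟨i, hi, h'⟩ := exists_radoCondition_update_erase hmono hsub h h₁ h₂ hne
  obtain ⟨P, hcover, hP⟩ := exists_cover_of_radoCondition hr hmono hsub _ h'
  have hshorter : ∀ x, Function.update L x₀ ((L x₀).erase i) x ⊆ L x := fun x ↦ by
    rcases eq_or_ne x x₀ with rfl | hx <;> simp [erase_subset, *]
  refine ⟨P, fun x hx ↦ ?_, hP⟩
  obtain ⟨j, hj, hxP⟩ := hcover x hx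
  exact ⟨j, hshorter x hj, hxP⟩
termination_by ∑ x ∈ X, #(L x)
decreasing_by exact sum_card_update_erase_lt hx₀ hi

end Rado

section ProductSums

variable {K σ ι : Type*} [Field K] [Fintype σ] [Fintype ι]

def ProductSumsVanish (A : ι → Submodule K (σ → K)) : Prop :=
  ∀ I : Finset ι, I.Nonempty → ∀ a : ι → σ → K, (∀ i ∈ I, a i ∈ A i) → ∑ j, ∏ i ∈ I, a i j = 0

variable {A : ι → Submodule K (σ → K)}

lemma ProductSumsVanish.sum_prod_one_add (hA : ProductSumsVanish A) {a : ι → σ → K}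
    (ha : ∀ i, a i ∈ A i) : ∑ j, ∏ i, (1 + a i j) = Fintype.card σ := by
  simp_rw [prod_one_add]
  rw [sum_comm, sum_eq_single_of_mem ∅ (empty_mem_powerset _)]
  · simp
  · exact fun I _ hI ↦ hA I (nonempty_iff_ne_empty.2 hI) a fun i _ ↦ ha i

variable [DecidableEq σ]

lemma ProductSumsVanish.exists_forall_ne_neg_one [CharZero K] (hA : ProductSumsVanish A)
    {s : Finset σ} (hs : s.Nonempty) {b : ι → σ → K}
    (hb : ∀ i, b i ∈ A i ⊓ LinearMap.ker (sᶜ.restrictₗ K)) :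
    ∃ j ∈ s, ∀ i, b i j ≠ -1 := by
  by_contra! hcover
  have hs_zero : ∑ j ∈ s, ∏ i, (1 + b i j) = 0 := sum_eq_zero fun j hj ↦ by
    obtain ⟨i, hi⟩ := hcover j hj
    exact prod_eq_zero (mem_univ i) (by rw [hi, add_neg_cancel])
  have hsc_one : ∑ j ∈ sᶜ, ∏ i, (1 + b i j) = #sᶜ := by
    rw [sum_congr rfl fun j hj ↦ prod_eq_one fun i _ ↦ by
      rw [mem_ker_restrictₗ.1 (hb i).2 j hj, add_zero]]
    simp
  have hsum := hA.sum_prod_one_add fun i ↦ (hb i).1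
  rw [← sum_add_sum_compl s, hs_zero, hsc_one, zero_add, Nat.cast_inj, card_compl] at hsum
  have := hs.card_pos
  have := s.card_le_univ
  omega

variable [DecidableEq ι]

lemma radoCondition_rankOn {s : Finset σ}
    (hsmall : ∀ u ⊂ s, u.Nonempty →
      ∑ i, finrank K (A i ⊓ LinearMap.ker (uᶜ.restrictₗ K) : Submodule K (σ → K)) < #u)
    (hbig : #s ≤ ∑ i, finrank K (A i ⊓ LinearMap.ker (sᶜ.restrictₗ K) : Submodule K (σ → K))) :
    RadoCondition (fun i ↦ (A i ⊓ LinearMap.ker (sᶜ.restrictₗ K)).rankOn) (fun _ ↦ univ) s := by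
  intro t hts
  simp only [mem_univ, filter_true]
  rcases t.eq_empty_or_nonempty with rfl | htne
  · simp
  have hker : ∀ i, A i ⊓ LinearMap.ker (sᶜ.restrictₗ K) ⊓ LinearMap.ker (t.restrictₗ K) =
      A i ⊓ LinearMap.ker ((s \ t)ᶜ.restrictₗ K) := fun i ↦ by
    ext a
    simp only [Submodule.mem_inf, mem_ker_restrictₗ, mem_compl, mem_sdiff]
    grind
  have hsplit : ∀ i, (A i ⊓ LinearMap.ker (sᶜ.restrictₗ K)).rankOn t +
      finrank K (A i ⊓ LinearMap.ker ((s \ t)ᶜ.restrictₗ K) : Submodule K (σ → K)) =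
      finrank K (A i ⊓ LinearMap.ker (sᶜ.restrictₗ K) : Submodule K (σ → K)) := fun i ↦ by
    rw [← hker]
    exact Submodule.rankOn_add_finrank_inf_ker _ t
  have hrest : ∑ i, finrank K (A i ⊓ LinearMap.ker ((s \ t)ᶜ.restrictₗ K) :
      Submodule K (σ → K)) ≤ #(s \ t) := by
    rcases (s \ t).eq_empty_or_nonempty with hempty | hne
    · rw [hempty, compl_empty, ker_restrictₗ_univ]
      simp
    · exact (hsmall _ (sdiff_ssubset hts htne) hne).le
  rw [← sum_congr rfl fun i _ ↦ hsplit i, sum_add_distrib] at hbig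
  have := card_sdiff_add_card_eq_card hts
  omega

theorem ProductSumsVanish.sum_finrank_inf_ker_lt_card [CharZero K] (hA : ProductSumsVanish A)
    (s : Finset σ) (hs : s.Nonempty) :
    ∑ i, finrank K (A i ⊓ LinearMap.ker (sᶜ.restrictₗ K) : Submodule K (σ → K)) < #s := by
  induction s using Finset.strongInduction with | H s ih
  by_contra! hbig
  obtain ⟨P, hcover, hP⟩ := exists_cover_of_radoCondition (fun i ↦ Submodule.rankOn_empty _)
    (fun i ↦ Submodule.rankOn_mono _) (fun i ↦ Submodule.rankOn_union_add_rankOn_inter_le _) _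
    (radoCondition_rankOn ih hbig)
  choose b hb hbP using fun i ↦ Submodule.exists_mem_restrictₗ_eq _ (hP i) fun _ ↦ -1
  obtain ⟨j, hj, hne⟩ := hA.exists_forall_ne_neg_one hs hb
  obtain ⟨i, -, hjP⟩ := hcover j hj
  exact hne i (congrFun (hbP i) ⟨j, hjP⟩)

end ProductSums

theorem sum_dim_le_of_product_condition_general
    (k n : ℕ) (hk : 1 ≤ k)
    (A : Fin n → Submodule ℂ (Fin k → ℂ))
    (hA : ∀ (I : Finset (Fin n)), I.Nonempty →
      ∀ (a : Fin n → (Fin k → ℂ)), (∀ i ∈ I, a i ∈ A i) →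
      ∑ j : Fin k, ∏ i ∈ I, a i j = 0) :
    ∑ i : Fin n, Module.finrank ℂ (A i) ≤ k - 1 := by
  have hlt := ProductSumsVanish.sum_finrank_inf_ker_lt_card hA univ (univ_nonempty_iff.2 ⟨⟨0, hk⟩⟩)
  have hfull : ∀ i, finrank ℂ (A i ⊓ LinearMap.ker ((univ : Finset (Fin k))ᶜ.restrictₗ ℂ) :
      Submodule ℂ (Fin k → ℂ)) = finrank ℂ (A i) := fun i ↦ by
    rw [compl_univ, ker_restrictₗ_empty, inf_top_eq]
  simp only [hfull, card_univ, Fintype.card_fin] at hlt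
  omega

/-- Let `k ≥ 1`, `n ≥ 1`, and let `A_1, …, A_n ⊆ ℂ^k` be linear subspaces such that for every
nonempty subset `I ⊆ {1, …, n}` and every choice of vectors `a i ∈ A i` for `i ∈ I`, one has
`∑_{j=1}^{k} ∏_{i ∈ I} (a i)_j = 0`.  Then `∑ i dim (A i) ≤ k - 1`. -/
theorem sum_dim_le_of_product_condition
    (k n : ℕ) (hk : 1 ≤ k) (hn : 1 ≤ n)
    (A : Fin n → Submodule ℂ (Fin k → ℂ))
    (hA : ∀ (I : Finset (Fin n)), I.Nonempty →
      ∀ (a : Fin n → (Fin k → ℂ)), (∀ i ∈ I, a i ∈ A i) →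
      ∑ j : Fin k, ∏ i ∈ I, a i j = 0) :
    ∑ i : Fin n, Module.finrank ℂ (A i) ≤ k - 1 :=
  sum_dim_le_of_product_condition_general k n hk A hA
end

section
/- Let k ≥ 1 and let f_1, …, f_k be nonzero formal Laurent series in ℂ((T)), with f_i' denoting the formal derivative of f_i and f_i^{-1} its multiplicative inverse in the field ℂ((T)). Suppose that for all integers m and n one has ∑_{i=1}^{k} (coefficient of T^m in f_i') · (coefficient of T^n in f_i^{-1}) = 0; equivalently, the two-variable expression ∑_{i=1}^{k} f_i'(S) · f_i(T)^{-1} vanishes identically. Then every f_i has order 0, i.e., the coefficient of T^0 in f_i is nonzero and f_i has no nonzero coefficients in negative degrees. -/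
/-!
Let `v = ord f_i` and read off the coefficient of `S^(v-1) T^(-v)`. Since `f_j⁻¹` has order
`-ord f_j` and leading coefficient inverse to that of `f_j`, the `j`-th term equals `v` when
`ord f_j = v` and vanishes otherwise. The identity therefore says `v · #{j | ord f_j = v} = 0`,
and the count is positive, so `v = 0` in characteristic zero.
-/

open Finset

namespace HahnSeries

variable {Γ K : Type*} [AddCommGroup Γ] [LinearOrder Γ] [IsOrderedAddMonoid Γ] [Field K]
  {x : HahnSeries Γ K}

theorem order_inv (hx : x ≠ 0) : x⁻¹.order = -x.order := by
  have := order_mul hx (inv_ne_zero hx)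
  rw [mul_inv_cancel₀ hx, order_one] at this
  exact eq_neg_of_add_eq_zero_right this.symm

theorem leadingCoeff_mul_leadingCoeff_inv (hx : x ≠ 0) :
    x.leadingCoeff * x⁻¹.leadingCoeff = 1 := by
  rw [← leadingCoeff_mul, mul_inv_cancel₀ hx, leadingCoeff_one]

theorem coeff_mul_coeff_inv_neg (hx : x ≠ 0) (v : Γ) :
    x.coeff v * x⁻¹.coeff (-v) = if x.order = v then 1 else 0 := by
  rcases lt_trichotomy x.order v with hlt | rfl | hgt
  · have : x⁻¹.coeff (-v) = 0 := coeff_eq_zero_of_lt_order (by rwa [order_inv hx, neg_lt_neg_iff])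
    rw [this, mul_zero, if_neg hlt.ne]
  · rw [if_pos rfl, ← order_inv hx]
    simpa only [leadingCoeff_eq] using leadingCoeff_mul_leadingCoeff_inv hx
  · rw [coeff_eq_zero_of_lt_order hgt, zero_mul, if_neg hgt.ne']

theorem sum_coeff_mul_coeff_inv_neg {ι : Type*} (s : Finset ι) {f : ι → HahnSeries Γ K}
    (hf : ∀ i ∈ s, f i ≠ 0) (v : Γ) :
    ∑ i ∈ s, (f i).coeff v * (f i)⁻¹.coeff (-v) = #{i ∈ s | (f i).order = v} := by
  rw [sum_congr rfl fun i hi ↦ coeff_mul_coeff_inv_neg (hf i hi) v, sum_boole]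

end HahnSeries

theorem LaurentSeries.order_eq_zero_of_deriv_orthogonality {ι K : Type*} [Fintype ι] [Field K]
    [CharZero K] {f : ι → LaurentSeries K} (hf : ∀ i, f i ≠ 0)
    (h : ∀ m n : ℤ, ∑ i, (((m + 1 : ℤ) : K) * (f i).coeff (m + 1)) * (f i)⁻¹.coeff n = 0)
    (i : ι) : (f i).order = 0 := by
  set v := (f i).order
  have hcount : (v : K) * #{j | (f j).order = v} = 0 := by
    rw [← HahnSeries.sum_coeff_mul_coeff_inv_neg univ (fun j _ ↦ hf j) v, mul_sum]
    simpa only [sub_add_cancel, mul_assoc] using h (v - 1) (-v)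
  have hcard : #{j | (f j).order = v} ≠ 0 := card_ne_zero_of_mem (a := i) (by simp [v])
  exact_mod_cast (mul_eq_zero.mp hcount).resolve_right (Nat.cast_ne_zero.mpr hcard)

theorem laurentSeries_order_eq_zero_of_deriv_orthogonality_general
    (k : ℕ) (f : Fin k → LaurentSeries ℂ) (hf : ∀ i, f i ≠ 0)
    (h : ∀ m n : ℤ,
      ∑ i : Fin k, (((m + 1 : ℤ) : ℂ) * (f i).coeff (m + 1)) * ((f i)⁻¹).coeff n = 0) :
    ∀ i, (f i).coeff 0 ≠ 0 ∧ ∀ n : ℤ, n < 0 → (f i).coeff n = 0 := by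
  intro i
  have hord := LaurentSeries.order_eq_zero_of_deriv_orthogonality hf h i
  refine ⟨hord ▸ HahnSeries.coeff_order_eq_zero.not.mpr (hf i), fun n hn ↦ ?_⟩
  exact HahnSeries.coeff_eq_zero_of_lt_order (hord ▸ hn)

/-- Let `k ≥ 1` and let `f_1, …, f_k` be nonzero formal Laurent series in `ℂ((T))`.
Suppose that for all integers `m` and `n`,
`∑_{i=1}^{k} (coeff of T^m in f_i') * (coeff of T^n in f_i⁻¹) = 0`,
where the coefficient of `T^m` in the formal derivative `f_i'` is
`(m+1) * (coeff of T^(m+1) in f_i)`.  Then every `f_i` has order `0`: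
its coefficient of `T^0` is nonzero and all its coefficients in negative
degrees vanish. -/
theorem laurentSeries_order_eq_zero_of_deriv_orthogonality
    (k : ℕ) (hk : 1 ≤ k) (f : Fin k → LaurentSeries ℂ) (hf : ∀ i, f i ≠ 0)
    (h : ∀ m n : ℤ,
      ∑ i : Fin k, (((m + 1 : ℤ) : ℂ) * (f i).coeff (m + 1)) * ((f i)⁻¹).coeff n = 0) :
    ∀ i, (f i).coeff 0 ≠ 0 ∧ ∀ n : ℤ, n < 0 → (f i).coeff n = 0 :=
  laurentSeries_order_eq_zero_of_deriv_orthogonality_general k f hf h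
end
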